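/- There exists an uncomputable infinite binary word U all of whose finite-state transducts are uncomputable, ultimately periodic, or finite. -/

import Mathlib

/-! For a transducer `A` and a target word `u` that is not ultimately periodic, every finite input
word `w` extends to a word `w ++ v` none of whose infinite extensions is transduced to `u`: either
some extension of `w` already outputs a letter disagreeing with `u`, or the outputs produced after
`w` stay bounded, or else a pigeonhole argument on states yields a loop of `A` with nonempty output,
and pumping it makes `u` ultimately periodic. So the inputs not transduced to `u` by `A` contain a
dense open subset of Cantor space. There are countably many transducers up to renaming states, and
countably many computable words, so by the Baire category theorem a comeagre set of words is
uncomputable and has no computable transduct that is not ultimately periodic. -/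

/-- A sequential finite-state transducer with input alphabet `S`,
output alphabet `G`, a finite set of states, an initial state,
a transition function and an output function. -/
structure FST (S G : Type) where
  Q : Type
  [fin : Fintype Q]
  init : Q
  tr : Q → S → Q
  out : Q → S → List G

namespace FST

variable {S G : Type}

/-- Extended transition function on finite words. -/
def trL (A : FST S G) : A.Q → List S → A.Q
  | q, [] => q
  | q, a :: u => A.trL (A.tr q a) u

/-- Extended output function on finite words. -/
def outL (A : FST S G) : A.Q → List S → List G
  | _, [] => []
  | q, a :: u => A.out q a ++ A.outL (A.tr q a) u

/-- Output produced from the initial state on the length-`m` prefix of the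
infinite input word `w`. -/
def outOn (A : FST S G) (w : ℕ → S) (m : ℕ) : List G :=
  A.outL A.init ((List.range m).map w)

/-- `A.Transduces w u` : running `A` on the infinite word `w` produces the
infinite word `u` (every letter of `u` eventually appears in the output of a
sufficiently long prefix of `w`). -/
def Transduces (A : FST S G) (w : ℕ → S) (u : ℕ → G) : Prop :=
  ∀ n : ℕ, ∃ m : ℕ, (A.outOn w m)[n]? = some (u n)

end FST

/-- An infinite word (or function) is ultimately periodic. -/
def UltimatelyPeriodic {α : Type} (u : ℕ → α) : Prop :=
  ∃ N q : ℕ, 1 ≤ q ∧ ∀ n, N ≤ n → u (n + q) = u n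

open Filter

def List.IsPrefixOfWord {α : Type*} (l : List α) (u : ℕ → α) : Prop :=
  ∀ i (h : i < l.length), l[i] = u i

namespace List

variable {α : Type*} {l : List α} {u : ℕ → α}

theorem isPrefixOfWord_getD (l : List α) (x : ℕ → α) :
    l.IsPrefixOfWord fun i => l.getD i (x i) := fun i hi => (getD_eq_getElem l (x i) hi).symm

theorem IsPrefixOfWord.map_range_length (h : l.IsPrefixOfWord u) : (range l.length).map u = l :=
  ext_getElem (by simp) fun i _ hi => by simpa using (h i hi).symm

theorem map_range_prefix_map_range (u : ℕ → α) {m k : ℕ} (h : m ≤ k) :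
    (range m).map u <+: (range k).map u := by
  rw [prefix_iff_eq_take, length_map, length_range, ← map_take, take_range, min_eq_left h]

theorem IsPrefixOfWord.prefix_map_range (h : l.IsPrefixOfWord u) {k : ℕ} (hk : l.length ≤ k) :
    l <+: (range k).map u :=
  h.map_range_length ▸ map_range_prefix_map_range u hk

end List

theorem ultimatelyPeriodic_of_isPrefixOfWord_append_flatten_replicate {α : Type} {u : ℕ → α}
    {s p : List α} (hp : p ≠ [])
    (h : ∀ k, (s ++ (List.replicate k p).flatten).IsPrefixOfWord u) : UltimatelyPeriodic u := by
  have hpos : 0 < p.length := List.length_pos_iff.2 hp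
  refine ⟨s.length, p.length, hpos, fun i hi => ?_⟩
  have hshift := h (i + 2)
  rw [List.replicate_succ, List.flatten_cons, ← List.append_assoc] at hshift
  have hbase := h (i + 1)
  -- Both letters are read off `x` at index `i - |s|`, once in `s ++ p ++ x` and once in `s ++ x`.
  set x := (List.replicate (i + 1) p).flatten
  have hx : i + 1 ≤ x.length := by
    simpa [x] using Nat.le_mul_of_pos_right (i + 1) hpos
  rw [← hshift (i + p.length) (by simp only [List.length_append]; omega),
    ← hbase i (by simp only [List.length_append]; omega),
    List.getElem_append_right (by simp only [List.length_append]; omega),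
    List.getElem_append_right (by omega)]
  congr 1
  simp only [List.length_append]
  omega

attribute [instance] FST.fin

namespace FST

variable {S G : Type} (A : FST S G)

theorem trL_append (q : A.Q) (x y : List S) : A.trL q (x ++ y) = A.trL (A.trL q x) y := by
  induction x generalizing q with
  | nil => rfl
  | cons a x ih => exact ih _

theorem outL_append (q : A.Q) (x y : List S) :
    A.outL q (x ++ y) = A.outL q x ++ A.outL (A.trL q x) y := by
  induction x generalizing q with
  | nil => rfl
  | cons a x ih => simp [outL, trL, ih]

theorem outL_prefix_outL (q : A.Q) {x y : List S} (h : x <+: y) : A.outL q x <+: A.outL q y := by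
  obtain ⟨z, rfl⟩ := h
  rw [outL_append]
  exact List.prefix_append _ _

theorem outOn_prefix_outOn (U : ℕ → S) {m k : ℕ} (h : m ≤ k) :
    A.outOn U m <+: A.outOn U k :=
  A.outL_prefix_outL _ (List.map_range_prefix_map_range U h)

theorem outOn_length {w : List S} {U : ℕ → S} (hw : w.IsPrefixOfWord U) :
    A.outOn U w.length = A.outL A.init w := by
  rw [outOn, hw.map_range_length]

section Transduces

variable {A} {U : ℕ → S} {u : ℕ → G} {w : List S}

theorem Transduces.isPrefixOfWord_outOn (hT : A.Transduces U u) (m : ℕ) :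
    (A.outOn U m).IsPrefixOfWord u := by
  intro i hi
  obtain ⟨m', hm'⟩ := hT i
  obtain ⟨hi', hm'⟩ := List.getElem?_eq_some_iff.1 hm'
  rw [(A.outOn_prefix_outOn U (le_max_left m m')).getElem hi, ← hm',
    (A.outOn_prefix_outOn U (le_max_right m m')).getElem hi']

theorem Transduces.isPrefixOfWord_outL (hT : A.Transduces U u) (hw : w.IsPrefixOfWord U) :
    (A.outL A.init w).IsPrefixOfWord u :=
  A.outOn_length hw ▸ hT.isPrefixOfWord_outOn _

theorem Transduces.exists_lt_length_outL (hT : A.Transduces U u) (hw : w.IsPrefixOfWord U)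
    (L : ℕ) : ∃ v, L < (A.outL A.init (w ++ v)).length := by
  obtain ⟨m, hm⟩ := hT L
  obtain ⟨v, hv⟩ := hw.prefix_map_range (le_max_right m w.length)
  refine ⟨v, (List.getElem?_eq_some_iff.1 hm).1.trans_le ?_⟩
  rw [hv]
  exact (A.outOn_prefix_outOn U (le_max_left m w.length)).length_le

end Transduces

theorem trL_flatten_replicate {q : A.Q} {b : List S} (hb : A.trL q b = q) (k : ℕ) :
    A.trL q (List.replicate k b).flatten = q := by
  induction k with
  | zero => rfl
  | succ k ih => rw [List.replicate_succ, List.flatten_cons, trL_append, hb, ih]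

theorem outL_flatten_replicate {q : A.Q} {b : List S} (hb : A.trL q b = q) (k : ℕ) :
    A.outL q (List.replicate k b).flatten = (List.replicate k (A.outL q b)).flatten := by
  induction k with
  | zero => rfl
  | succ k ih =>
    rw [List.replicate_succ, List.flatten_cons, outL_append, hb, ih, List.replicate_succ,
      List.flatten_cons]

theorem length_outL_le {M : ℕ} (hM : ∀ q s, (A.out q s).length ≤ M) (q : A.Q) (v : List S) :
    (A.outL q v).length ≤ v.length * M := by
  induction v generalizing q with
  | nil => simp [outL]
  | cons a v ih =>
    simp only [outL, List.length_append, List.length_cons]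
    linarith [hM q a, ih (A.tr q a)]

theorem outL_append_append_of_loop {q : A.Q} {a b : List S} (hq : A.trL q (a ++ b) = A.trL q a)
    (hb : A.outL (A.trL q a) b = []) (c : List S) :
    A.outL q (a ++ b ++ c) = A.outL q (a ++ c) := by
  rw [outL_append, hq, outL_append, hb, List.append_nil, outL_append]

theorem exists_trL_take_eq (q : A.Q) {v : List S} (hv : Fintype.card A.Q < v.length) :
    ∃ i j, i < j ∧ j ≤ v.length ∧ A.trL q (v.take i) = A.trL q (v.take j) := by
  obtain ⟨i, j, hij, heq⟩ := Fintype.exists_ne_map_eq_of_card_lt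
    (fun i : Fin (Fintype.card A.Q + 1) => A.trL q (v.take i)) (by simp)
  rcases lt_or_gt_of_ne hij with h | h
  · exact ⟨i, j, h, by omega, heq⟩
  · exact ⟨j, i, h, by omega, heq.symm⟩

/-- Cutting a silent loop out of an input keeps its output, so every output from `q` is the output
of an input of length at most `|Q|`. -/
theorem length_outL_le_of_forall_loop {M : ℕ} (hM : ∀ q s, (A.out q s).length ≤ M) {q : A.Q}
    (hloop : ∀ a b, A.trL q (a ++ b) = A.trL q a → A.outL (A.trL q a) b = []) (v : List S) :
    (A.outL q v).length ≤ Fintype.card A.Q * M := by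
  induction h : v.length using Nat.strong_induction_on generalizing v with
  | _ n ih =>
    by_cases hv : v.length ≤ Fintype.card A.Q
    · exact (A.length_outL_le hM q v).trans (Nat.mul_le_mul_right M hv)
    obtain ⟨i, j, hij, hj, heq⟩ := A.exists_trL_take_eq q (not_le.1 hv)
    set a := v.take i
    set b := (v.take j).drop i
    have hab : a ++ b = v.take j := by
      rw [← List.take_append_drop i (v.take j), List.take_take, min_eq_left hij.le]
    have hv : v = a ++ b ++ v.drop j := by rw [hab, List.take_append_drop]
    rw [hv, A.outL_append_append_of_loop (hab ▸ heq.symm) (hloop a b (hab ▸ heq.symm))]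
    have hshorter : (a ++ v.drop j).length < n := by
      simp only [a, List.length_append, List.length_take, List.length_drop]
      omega
    exact ih _ hshorter _ rfl

theorem exists_loop_of_unbounded [Finite S] {q : A.Q}
    (h : ∀ L, ∃ v, L < (A.outL q v).length) :
    ∃ a b, A.trL q (a ++ b) = A.trL q a ∧ A.outL (A.trL q a) b ≠ [] := by
  obtain ⟨M, hM⟩ := Finite.exists_le fun p : A.Q × S => (A.out p.1 p.2).length
  by_contra! hloop
  obtain ⟨v, hv⟩ := h (Fintype.card A.Q * M)
  exact hv.not_ge (A.length_outL_le_of_forall_loop (fun q s => hM (q, s)) hloop v)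

theorem exists_append_forall_not_transduces [Finite S] {u : ℕ → G} (hu : ¬UltimatelyPeriodic u)
    (w : List S) : ∃ v, ∀ U, (w ++ v).IsPrefixOfWord U → ¬A.Transduces U u := by
  by_contra! hlive
  have hcons : ∀ v, (A.outL A.init (w ++ v)).IsPrefixOfWord u := fun v => by
    obtain ⟨U, hU, hT⟩ := hlive v
    exact hT.isPrefixOfWord_outL hU
  have hunbounded : ∀ L, ∃ v, L < (A.outL (A.trL A.init w) v).length := fun L => by
    obtain ⟨U, hU, hT⟩ := hlive []
    obtain ⟨v, hv⟩ := hT.exists_lt_length_outL hU (L + (A.outL A.init w).length)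
    rw [List.append_nil, outL_append, List.length_append] at hv
    exact ⟨v, by omega⟩
  obtain ⟨a, b, hloop, hb⟩ := A.exists_loop_of_unbounded hunbounded
  have hb' : A.trL (A.trL A.init (w ++ a)) b = A.trL A.init (w ++ a) := by
    rw [← trL_append, List.append_assoc, trL_append A A.init w, hloop, ← trL_append]
  refine hu (ultimatelyPeriodic_of_isPrefixOfWord_append_flatten_replicate
    (s := A.outL A.init (w ++ a)) (A.trL_append A.init w a ▸ hb) fun k => ?_)
  have := hcons (a ++ (List.replicate k b).flatten)
  rwa [← List.append_assoc, outL_append, outL_flatten_replicate _ hb'] at this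

end FST

section CantorSpace

variable {S : Type} [TopologicalSpace S] [DiscreteTopology S]

theorem dense_of_forall_cylinder_inter_nonempty {s : Set (ℕ → S)}
    (h : ∀ x n, (PiNat.cylinder x n ∩ s).Nonempty) : Dense s := by
  rw [(PiNat.isTopologicalBasis_cylinders _).dense_iff]
  rintro _ ⟨x, n, rfl⟩ -
  exact h x n

theorem dense_compl_singleton_of_nontrivial [Nontrivial S] (t : ℕ → S) :
    Dense ({t}ᶜ : Set (ℕ → S)) :=
  dense_of_forall_cylinder_inter_nonempty fun x n => by
    obtain ⟨a, ha⟩ := exists_ne (t n)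
    exact ⟨Function.update x n a, PiNat.update_mem_cylinder x n a,
      fun h => ha (by simpa using congrFun h n)⟩

theorem eventually_residual_notMem [Nontrivial S] {T : Set (ℕ → S)} (hT : T.Countable) :
    ∀ᶠ U in residual (ℕ → S), U ∉ T := by
  have hne : ∀ᶠ U in residual (ℕ → S), ∀ t ∈ T, U ≠ t :=
    (eventually_countable_ball hT).2 fun t _ => residual_of_dense_open
      isClosed_singleton.isOpen_compl (dense_compl_singleton_of_nontrivial t)
  filter_upwards [hne] with U hU hUT using hU U hUT rfl

theorem FST.dense_interior_setOf_not_transduces {G : Type} [Finite S] (A : FST S G) {u : ℕ → G}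
    (hu : ¬UltimatelyPeriodic u) : Dense (interior {U | ¬A.Transduces U u}) :=
  dense_of_forall_cylinder_inter_nonempty fun x n => by
    obtain ⟨v, hv⟩ := A.exists_append_forall_not_transduces hu ((List.range n).map x)
    set l := (List.range n).map x ++ v
    have hl := l.isPrefixOfWord_getD x
    refine ⟨fun i => l.getD i (x i), fun i hi => ?_, mem_interior.2
      ⟨PiNat.cylinder _ l.length, fun V hV => hv V fun i hi => ?_, PiNat.isOpen_cylinder _ _ _,
        PiNat.self_mem_cylinder _ _⟩⟩
    · show l.getD i (x i) = x i
      rw [List.getD_append _ _ _ i (by simpa using hi)]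
      simp [hi]
    · exact (hl i hi).trans (hV i hi).symm

end CantorSpace

namespace FST

variable {S G : Type}

/-- Transducers with states `Fin n`: a countable type, and every transducer is one of them up to
renaming its states. -/
abbrev Code (S G : Type) : Type :=
  Σ n : ℕ, Fin n × (Fin n → S → Fin n) × (Fin n → S → List G)

def ofCode : Code S G → FST S G
  | ⟨n, init, tr, out⟩ => ⟨Fin n, init, tr, out⟩

theorem exists_ofCode_transduces_eq (A : FST S G) :
    ∃ c : Code S G, (ofCode c).Transduces = A.Transduces := by
  let e := Fintype.equivFin A.Q
  let c : Code S G :=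
    ⟨_, e A.init, fun q s => e (A.tr (e.symm q) s), fun q s => A.out (e.symm q) s⟩
  have houtL (v : List S) : ∀ q, (ofCode c).outL (e q) v = A.outL q v := by
    induction v with
    | nil => exact fun _ => rfl
    | cons a v ih =>
      intro q
      simp only [outL, ofCode, c, Equiv.symm_apply_apply] at ih ⊢
      rw [ih]
  refine ⟨c, funext₂ fun U u => ?_⟩
  have hinit : (ofCode c).init = e A.init := rfl
  simp only [Transduces, outOn, hinit, houtL]

theorem eventually_residual_forall_not_transduces [TopologicalSpace S] [DiscreteTopology S]
    [Finite S] [Countable G] {W : Set (ℕ → G)} (hW : W.Countable)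
    (hUP : ∀ u ∈ W, ¬UltimatelyPeriodic u) :
    ∀ᶠ U in residual (ℕ → S), ∀ (A : FST S G), ∀ u ∈ W, ¬A.Transduces U u := by
  have hcode : ∀ᶠ U in residual (ℕ → S),
      ∀ (c : Code S G), ∀ u ∈ W, ¬(ofCode c).Transduces U u :=
    eventually_countable_forall.2 fun c => (eventually_countable_ball hW).2 fun u hu =>
      mem_of_superset (residual_of_dense_open isOpen_interior
        ((ofCode c).dense_interior_setOf_not_transduces (hUP u hu))) interior_subset
  filter_upwards [hcode] with U hU A u hu
  obtain ⟨c, hc⟩ := A.exists_ofCode_transduces_eq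
  exact hc ▸ hU c u hu

end FST

theorem countable_setOf_computable {σ : Type*} [Primcodable σ] :
    {u : ℕ → σ | Computable u}.Countable := by
  rw [← Set.countable_coe_iff]
  refine Function.Injective.countable (β := {f : ℕ → ℕ // Computable f})
    (f := fun u => ⟨fun n => Encodable.encode (u.1 n), Computable.encode.comp u.2⟩) ?_
  intro u v huv
  exact Subtype.ext <| funext fun n =>
    Encodable.encode_injective (congrFun (congrArg Subtype.val huv) n)

/-- There exists an uncomputable infinite binary word `U` all of whose
finite-state transducts are uncomputable or ultimately periodic (finite
outputs are excluded by the definition of `Transduces`, which asks for an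
infinite output word). -/
theorem exists_hereditarily_uncomputable_word :
    ∃ U : ℕ → Bool, ¬ Computable U ∧
      ∀ (A : FST Bool Bool) (u : ℕ → Bool), A.Transduces U u →
        ¬ Computable u ∨ UltimatelyPeriodic u := by
  have hcomp := countable_setOf_computable (σ := Bool)
  have hgeneric := (eventually_residual_notMem hcomp).and
    (FST.eventually_residual_forall_not_transduces (S := Bool)
      (W := {u | Computable u ∧ ¬UltimatelyPeriodic u}) (hcomp.mono fun _ hu => hu.1)
      fun _ hu => hu.2)
  obtain ⟨U, hU, htransducts⟩ := (dense_of_mem_residual hgeneric).nonempty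
  refine ⟨U, hU, fun A u hAu => ?_⟩
  by_contra! hu
  exact htransducts A u hu hAu
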